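/- arXiv:1608.04158 — 9 statements merged into one kernel-verified Lean document; each statement's English description precedes it below -/
import Mathlib

section
/- For n ≥ 5 and a ∈ Z_n with a ∉ {1,-1} and a² ≡ ±1 (mod n), the map x ↦ a·x is a graph automorphism of the circulant graph C_n(1,a) that maps the edge {0,1} to an edge of the jumpset of a. -/
/-! Multiplication by a unit `u` is an isomorphism `C_n(1,a) ≃g C_n(1,b)` as soon as it maps the
connection set `{±1, ±a}` onto `{±1, ±b}`. When `a² = ±1`, multiplication by `a` permutes `{±1, ±a}`
(it sends `±1 ↦ ±a` and `±a ↦ ±a² = ±1`), so it is an automorphism, and it sends `{0, 1}` to the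
jump edge `{0, a}`. -/

/-- The circulant graph `C_n(1,a)` on `ZMod n`: `i ~ j` iff `j - i ∈ {±1, ±a}`. -/
def circGraph (n : ℕ) (a : ZMod n) : SimpleGraph (ZMod n) :=
  SimpleGraph.fromRel (fun i j => j = i + 1 ∨ j = i + a)

namespace circGraph

variable {n : ℕ}

def connectionSet (a : ZMod n) : Set (ZMod n) := {1, -1, a, -a}

theorem adj_iff_sub_mem_connectionSet (a x y : ZMod n) :
    (circGraph n a).Adj x y ↔ x ≠ y ∧ y - x ∈ connectionSet a := by
  simp only [circGraph, SimpleGraph.fromRel_adj, connectionSet, Set.mem_insert_iff,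
    Set.mem_singleton_iff]
  exact and_congr_right fun _ => by grind

theorem neg_mem_connectionSet {a d : ZMod n} (hd : d ∈ connectionSet a) :
    -d ∈ connectionSet a := by
  simp only [connectionSet, Set.mem_insert_iff, Set.mem_singleton_iff] at hd ⊢
  rcases hd with rfl | rfl | rfl | rfl <;> simp

theorem mul_mem_connectionSet {a d : ZMod n} (hsq : a ^ 2 = 1 ∨ a ^ 2 = -1)
    (hd : d ∈ connectionSet a) : a * d ∈ connectionSet a := by
  simp only [connectionSet, Set.mem_insert_iff, Set.mem_singleton_iff] at hd ⊢
  rcases hd with rfl | rfl | rfl | rfl <;> rcases hsq with h | h <;> simp [← sq, h]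

theorem mul_mem_connectionSet_iff {a d : ZMod n} (hsq : a ^ 2 = 1 ∨ a ^ 2 = -1) :
    a * d ∈ connectionSet a ↔ d ∈ connectionSet a := by
  refine ⟨fun had => ?_, mul_mem_connectionSet hsq⟩
  -- Applying `a` once more gives `a² d = ±d`, and the connection set is symmetric.
  have h := mul_mem_connectionSet hsq had
  rw [← mul_assoc, ← sq] at h
  rcases hsq with hsq | hsq <;> simp only [hsq, one_mul, neg_one_mul] at h
  exacts [h, neg_neg d ▸ neg_mem_connectionSet h]

def mulIso (u : (ZMod n)ˣ) {a b : ZMod n}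
    (h : ∀ d, (u : ZMod n) * d ∈ connectionSet b ↔ d ∈ connectionSet a) :
    circGraph n a ≃g circGraph n b where
  toEquiv := Units.mulLeft u
  map_rel_iff' {x y} := by
    simp only [Units.mulLeft_apply, adj_iff_sub_mem_connectionSet, ← mul_sub, h, ne_eq,
      Units.mul_right_inj]

theorem mulIso_apply (u : (ZMod n)ˣ) {a b : ZMod n}
    (h : ∀ d, (u : ZMod n) * d ∈ connectionSet b ↔ d ∈ connectionSet a) (x : ZMod n) :
    mulIso u h x = (u : ZMod n) * x :=
  rfl

end circGraph

theorem circ_mul_automorphism_general (n : ℕ) (a : ZMod n) (hsq : a ^ 2 = 1 ∨ a ^ 2 = -1) :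
    ∃ g : circGraph n a ≃g circGraph n a,
      (∀ x : ZMod n, g x = a * x) ∧
      ∃ j : ZMod n, Sym2.map g s((0 : ZMod n), (1 : ZMod n)) = s(j, j + a) := by
  have ha : IsUnit (a ^ 2) := by rcases hsq with h | h <;> simp [h]
  obtain ⟨u, rfl⟩ := (isUnit_pow_iff two_ne_zero).mp ha
  refine ⟨circGraph.mulIso u fun _ => circGraph.mul_mem_connectionSet_iff hsq,
    circGraph.mulIso_apply u _, 0, ?_⟩
  simp [circGraph.mulIso_apply]

/-- For `n ≥ 5` and `a ∉ {1,-1}` with `a² ≡ ±1 (mod n)`, multiplication by `a` is an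
automorphism of `C_n(1,a)` mapping the edge `{0,1}` into the jumpset of `a`. -/
theorem circ_mul_automorphism (n : ℕ) (hn : 5 ≤ n) (a : ZMod n)
    (ha1 : a ≠ 1) (ha2 : a ≠ -1) (hsq : a ^ 2 = 1 ∨ a ^ 2 = -1) :
    ∃ g : circGraph n a ≃g circGraph n a,
      (∀ x : ZMod n, g x = a * x) ∧
      ∃ j : ZMod n, Sym2.map g s((0 : ZMod n), (1 : ZMod n)) = s(j, j + a) :=
  circ_mul_automorphism_general n a hsq
end

section
/- For n ≥ 5 and a ∈ Z_n with a ∉ {0,1,-1} and a² ≡ ±1 (mod n), the circulant graph C_n(1,a) is dart-transitive (arc-transitive). -/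
/-
For `a² = ±1` the connection set `S = {±1, ±a}` is closed under multiplication and every
element satisfies `s⁴ = 1`, so `S` is a group of units of `ℤ/n`. Multiplication by a unit
`c` with `cS = S`, followed by a translation, is then an automorphism of the Cayley graph
`Cay(ℤ/n, S)`. Given darts `(u, v)` and `(x, y)`, with `s = v - u` and `s' = y - x` in `S`,
the map `z ↦ s' s³ (z - u) + x` (note `s³ = s⁻¹`) sends the first dart to the second.
-/

def SimpleGraph.affineIsoOfCayley {R : Type*} [Ring R] (G : SimpleGraph R) (S : Set R)
    (hG : ∀ u v, G.Adj u v ↔ u ≠ v ∧ v - u ∈ S) (c : Rˣ) (t : R)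
    (hc : ∀ z, (c : R) * z ∈ S ↔ z ∈ S) : G ≃g G where
  toEquiv := (Units.mulLeft c).trans (Equiv.addRight t)
  map_rel_iff' {u v} := by
    have hsub : (c * v + t) - (c * u + t) = c * (v - u) := by
      rw [add_sub_add_right_eq_sub, mul_sub]
    simp only [Equiv.trans_apply, Units.mulLeft_apply, Equiv.coe_addRight, hG, hsub, hc,
      ne_eq, add_left_inj, c.mul_right_inj]

@[simp]
lemma SimpleGraph.affineIsoOfCayley_apply {R : Type*} [Ring R] (G : SimpleGraph R) (S : Set R)
    (hG : ∀ u v, G.Adj u v ↔ u ≠ v ∧ v - u ∈ S) (c : Rˣ) (t : R)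
    (hc : ∀ z, (c : R) * z ∈ S ↔ z ∈ S) (z : R) :
    G.affineIsoOfCayley S hG c t hc z = c * z + t :=
  rfl

section circulant

variable {n : ℕ} {a : ZMod n}

def circConnectionSet (a : ZMod n) : Set (ZMod n) := {1, -1, a, -a}

lemma circGraph_adj_iff (u v : ZMod n) :
    (circGraph n a).Adj u v ↔ u ≠ v ∧ v - u ∈ circConnectionSet a := by
  have hneg (d : ZMod n) : v - u = -d ↔ u = v + d := by
    rw [← neg_sub, neg_inj, sub_eq_iff_eq_add']
  simp only [circGraph, SimpleGraph.fromRel_adj, circConnectionSet, Set.mem_insert_iff,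
    Set.mem_singleton_iff, hneg, sub_eq_iff_eq_add']
  tauto

lemma mul_mem_circConnectionSet (hsq : a ^ 2 = 1 ∨ a ^ 2 = -1) {x y : ZMod n}
    (hx : x ∈ circConnectionSet a) (hy : y ∈ circConnectionSet a) :
    x * y ∈ circConnectionSet a := by
  simp only [circConnectionSet, Set.mem_insert_iff, Set.mem_singleton_iff] at hx hy ⊢
  rcases hx with rfl | rfl | rfl | rfl <;> rcases hy with rfl | rfl | rfl | rfl <;>
    rcases hsq with h | h <;> simp [← sq, h]

lemma pow_mem_circConnectionSet (hsq : a ^ 2 = 1 ∨ a ^ 2 = -1) {s : ZMod n}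
    (hs : s ∈ circConnectionSet a) (k : ℕ) : s ^ k ∈ circConnectionSet a := by
  induction k with
  | zero => exact Or.inl (pow_zero s)
  | succ k ih => exact pow_succ s k ▸ mul_mem_circConnectionSet hsq ih hs

lemma pow_four_eq_one_of_mem_circConnectionSet (hsq : a ^ 2 = 1 ∨ a ^ 2 = -1) {s : ZMod n}
    (hs : s ∈ circConnectionSet a) : s ^ 4 = 1 := by
  have ha : a ^ 4 = 1 := by
    rcases hsq with h | h <;> simp [show a ^ 4 = (a ^ 2) ^ 2 by ring, h]
  simp only [circConnectionSet, Set.mem_insert_iff, Set.mem_singleton_iff] at hs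
  rcases hs with rfl | rfl | rfl | rfl <;> norm_num [ha]

lemma mul_mem_circConnectionSet_iff (hsq : a ^ 2 = 1 ∨ a ^ 2 = -1) {c : ZMod n}
    (hc : c ∈ circConnectionSet a) (z : ZMod n) :
    c * z ∈ circConnectionSet a ↔ z ∈ circConnectionSet a := by
  refine ⟨fun h => ?_, mul_mem_circConnectionSet hsq hc⟩
  have hz : c ^ 3 * (c * z) = z := by
    rw [← mul_assoc, ← pow_succ, pow_four_eq_one_of_mem_circConnectionSet hsq hc, one_mul]
  exact hz ▸ mul_mem_circConnectionSet hsq (pow_mem_circConnectionSet hsq hc 3) h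

end circulant

theorem circ_dartTransitive_general (n : ℕ) (a : ZMod n) (hsq : a ^ 2 = 1 ∨ a ^ 2 = -1) :
    ∀ u v x y : ZMod n, (circGraph n a).Adj u v → (circGraph n a).Adj x y →
      ∃ g : circGraph n a ≃g circGraph n a, g u = x ∧ g v = y := by
  intro u v x y huv hxy
  rw [circGraph_adj_iff] at huv hxy
  have hs4 := pow_four_eq_one_of_mem_circConnectionSet hsq huv.2
  have hc : (y - x) * (v - u) ^ 3 ∈ circConnectionSet a :=
    mul_mem_circConnectionSet hsq hxy.2 (pow_mem_circConnectionSet hsq huv.2 3)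
  let c : (ZMod n)ˣ := Units.ofPowEqOne _ 4 (pow_four_eq_one_of_mem_circConnectionSet hsq hc)
    four_ne_zero
  refine ⟨(circGraph n a).affineIsoOfCayley _ circGraph_adj_iff c (x - c * u)
    (mul_mem_circConnectionSet_iff hsq hc), ?_, ?_⟩
  · simp
  · have hcv : (c : ZMod n) = (y - x) * (v - u) ^ 3 := rfl
    simp only [SimpleGraph.affineIsoOfCayley_apply, hcv]
    linear_combination (y - x) * hs4

/-- For `n ≥ 5` and `a ∉ {0,1,-1}` with `a² ≡ ±1 (mod n)`, the circulant `C_n(1,a)`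
is dart-transitive. -/
theorem circ_dartTransitive (n : ℕ) (hn : 5 ≤ n) (a : ZMod n)
    (ha0 : a ≠ 0) (ha1 : a ≠ 1) (ha2 : a ≠ -1) (hsq : a ^ 2 = 1 ∨ a ^ 2 = -1) :
    ∀ u v x y : ZMod n, (circGraph n a).Adj u v → (circGraph n a).Adj x y →
      ∃ g : circGraph n a ≃g circGraph n a, g u = x ∧ g v = y :=
  circ_dartTransitive_general n a hsq
end

section
/- Every edge-transitive circulant graph C_n(a,b) of valence 4 is also dart-transitive. -/
/-!
Edge-transitivity moves any edge `{u, v}` onto any edge `{x, y}`, possibly reversing it. On a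
circulant graph every edge `{x, y}` is also reversed by the reflection `i ↦ x + y - i`, which
preserves the connection set `{±a, ±b}` because it is closed under negation; composing with this
reflection when needed turns edge-transitivity into dart-transitivity.
-/

/-- The circulant graph `C_n(a,b)` on `ZMod n`: `i ~ j` iff `j - i ∈ {±a, ±b}`. -/
def circGraph2 (n : ℕ) (a b : ZMod n) : SimpleGraph (ZMod n) :=
  SimpleGraph.fromRel (fun i j => j = i + a ∨ j = i + b)

namespace SimpleGraph

variable {V : Type*} (G : SimpleGraph V)

theorem exists_iso_map_dart_of_edgeTransitive_of_reversible
    (hET : ∀ e ∈ G.edgeSet, ∀ f ∈ G.edgeSet, ∃ g : G ≃g G, Sym2.map g e = f)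
    (hrev : ∀ x y, G.Adj x y → ∃ r : G ≃g G, r x = y ∧ r y = x)
    {u v x y : V} (huv : G.Adj u v) (hxy : G.Adj x y) :
    ∃ g : G ≃g G, g u = x ∧ g v = y := by
  obtain ⟨g, hg⟩ := hET s(u, v) huv s(x, y) hxy
  rw [Sym2.map_mk, Sym2.eq_iff] at hg
  rcases hg with ⟨hu, hv⟩ | ⟨hu, hv⟩
  · exact ⟨g, hu, hv⟩
  · obtain ⟨r, hrx, hry⟩ := hrev x y hxy
    exact ⟨g.trans r, by simp [hu, hry], by simp [hv, hrx]⟩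

end SimpleGraph

theorem circGraph2_adj_sub_sub_iff {n : ℕ} {a b : ZMod n} (c i j : ZMod n) :
    (circGraph2 n a b).Adj (c - i) (c - j) ↔ (circGraph2 n a b).Adj i j := by
  simp only [circGraph2, SimpleGraph.fromRel_adj, sub_right_inj, ne_eq]
  refine and_congr_right fun _ => ?_
  constructor <;> rintro ((h | h) | (h | h)) <;>
    first
    | exact Or.inl (Or.inl (by linear_combination h))
    | exact Or.inl (Or.inr (by linear_combination h))
    | exact Or.inr (Or.inl (by linear_combination h))
    | exact Or.inr (Or.inr (by linear_combination h))

def circGraph2Reflect (n : ℕ) (a b c : ZMod n) : circGraph2 n a b ≃g circGraph2 n a b where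
  toEquiv := Equiv.subLeft c
  map_rel_iff' := circGraph2_adj_sub_sub_iff c _ _

@[simp]
theorem circGraph2Reflect_apply (n : ℕ) (a b c i : ZMod n) :
    circGraph2Reflect n a b c i = c - i := rfl

theorem circGraph2_exists_iso_swap (n : ℕ) (a b x y : ZMod n) :
    ∃ r : circGraph2 n a b ≃g circGraph2 n a b, r x = y ∧ r y = x :=
  ⟨circGraph2Reflect n a b (x + y), by simp, by simp⟩

theorem circ_edgeTransitive_implies_dartTransitive_general (n : ℕ) (a b : ZMod n)
    (hET : ∀ e ∈ (circGraph2 n a b).edgeSet, ∀ f ∈ (circGraph2 n a b).edgeSet,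
      ∃ g : circGraph2 n a b ≃g circGraph2 n a b, Sym2.map g e = f) :
    ∀ u v x y : ZMod n, (circGraph2 n a b).Adj u v → (circGraph2 n a b).Adj x y →
      ∃ g : circGraph2 n a b ≃g circGraph2 n a b, g u = x ∧ g v = y :=
  fun _ _ _ _ huv hxy =>
    (circGraph2 n a b).exists_iso_map_dart_of_edgeTransitive_of_reversible hET
      (fun x y _ => circGraph2_exists_iso_swap n a b x y) huv hxy

/-- Every edge-transitive tetravalent circulant `C_n(a,b)` is dart-transitive. -/
theorem circ_edgeTransitive_implies_dartTransitive (n : ℕ) (a b : ZMod n)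
    (ha0 : a ≠ 0) (hb0 : b ≠ 0) (hab : a ≠ b) (hab' : a ≠ -b)
    (ha2 : a + a ≠ 0) (hb2 : b + b ≠ 0)
    (hET : ∀ e ∈ (circGraph2 n a b).edgeSet, ∀ f ∈ (circGraph2 n a b).edgeSet,
      ∃ g : circGraph2 n a b ≃g circGraph2 n a b, Sym2.map g e = f) :
    ∀ u v x y : ZMod n, (circGraph2 n a b).Adj u v → (circGraph2 n a b).Adj x y →
      ∃ g : circGraph2 n a b ≃g circGraph2 n a b, g u = x ∧ g v = y :=
  circ_edgeTransitive_implies_dartTransitive_general n a b hET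
end

section
/- For m ≥ 3, the circulant graph C_{2m}(1, m+1) is isomorphic to the wreath graph W(m,2). -/
/-- The wreath graph W(n,2) on vertex set `ZMod n × ZMod 2`. -/
def wreathGraph (n : ℕ) : SimpleGraph (ZMod n × ZMod 2) :=
  SimpleGraph.fromRel (fun u v => v.1 = u.1 + 1)

def SimpleGraph.Iso.fromRel {V W : Type*} {r : V → V → Prop} {s : W → W → Prop} (e : V ≃ W)
    (h : ∀ a b, s (e a) (e b) ↔ r a b) : SimpleGraph.fromRel r ≃g SimpleGraph.fromRel s :=
  ⟨e, by simp only [SimpleGraph.fromRel_adj, e.injective.ne_iff, h, implies_true]⟩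

namespace ZMod

variable {m : ℕ} [NeZero m]

theorem castHom_double_eq_zero_iff (x : ZMod (2 * m)) :
    castHom (dvd_mul_left m 2) (ZMod m) x = 0 ↔ x = 0 ∨ x = m := by
  constructor
  · intro hx
    rw [castHom_apply, ← natCast_val, natCast_eq_zero_iff] at hx
    obtain ⟨k, hk⟩ := hx
    have hk2 : k < 2 := by nlinarith [x.val_lt, NeZero.pos m]
    rw [← natCast_zmod_val x, hk]
    interval_cases k <;> simp
  · rintro (rfl | rfl) <;> simp

theorem castHom_double_eq_add_one_iff (i j : ZMod (2 * m)) :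
    castHom (dvd_mul_left m 2) (ZMod m) j = castHom (dvd_mul_left m 2) (ZMod m) i + 1 ↔
      j = i + 1 ∨ j = i + (m + 1) := by
  rw [← sub_eq_zero, ← map_one (castHom (dvd_mul_left m 2) (ZMod m)), ← map_add, ← map_sub,
    castHom_double_eq_zero_iff, sub_eq_zero, sub_eq_iff_eq_add,
    add_left_comm]

theorem castHom_double_prod_val_div_injective :
    Function.Injective fun i : ZMod (2 * m) =>
      (castHom (dvd_mul_left m 2) (ZMod m) i, ((i.val / m : ℕ) : ZMod 2)) := by
  intro i j hij
  simp only [Prod.mk.injEq, castHom_apply, ← natCast_val, natCast_eq_natCast_iff'] at hij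
  obtain ⟨hmod, hdiv⟩ := hij
  have hi : i.val / m < 2 := Nat.div_lt_of_lt_mul (by simpa [mul_comm] using i.val_lt)
  have hj : j.val / m < 2 := Nat.div_lt_of_lt_mul (by simpa [mul_comm] using j.val_lt)
  rw [Nat.mod_eq_of_lt hi, Nat.mod_eq_of_lt hj] at hdiv
  apply val_injective
  rw [← Nat.div_add_mod i.val m, ← Nat.div_add_mod j.val m, hmod, hdiv]

/-- `i ↦ (i mod m, i div m)`. -/
noncomputable def doubleEquivProd (m : ℕ) [NeZero m] : ZMod (2 * m) ≃ ZMod m × ZMod 2 :=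
  Equiv.ofBijective _ <| (Fintype.bijective_iff_injective_and_card _).2
    ⟨castHom_double_prod_val_div_injective, by simp [ZMod.card, mul_comm]⟩

@[simp]
theorem doubleEquivProd_fst (i : ZMod (2 * m)) :
    (doubleEquivProd m i).1 = castHom (dvd_mul_left m 2) (ZMod m) i :=
  rfl

end ZMod

noncomputable def circWreathIso (m : ℕ) [NeZero m] : circGraph (2 * m) (m + 1) ≃g wreathGraph m :=
  SimpleGraph.Iso.fromRel (ZMod.doubleEquivProd m) fun i j => by
    rw [ZMod.doubleEquivProd_fst, ZMod.doubleEquivProd_fst, ZMod.castHom_double_eq_add_one_iff]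

/-- For `m ≥ 3`, the circulant `C_{2m}(1, m+1)` is isomorphic to `W(m,2)`. -/
theorem circ_iso_wreath (m : ℕ) (hm : 3 ≤ m) :
    Nonempty (circGraph (2 * m) ((m : ZMod (2 * m)) + 1) ≃g wreathGraph m) := by
  have : NeZero m := ⟨by omega⟩
  exact ⟨circWreathIso m⟩
end

section
/- Every half-arc-transitive graph (vertex- and edge-transitive but not dart-transitive) has even valence. -/
/-!
Fix a dart `(a, b)` and orient each edge `{v, w}` as `v → w` when `(v, w)` lies in the
`Aut Γ`-orbit of `(a, b)`. Edge-transitivity puts every edge in this orbit in at least one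
direction; if some edge were there in both directions, some automorphism would reverse
`(a, b)`, and the graph would be dart-transitive. So this is an orientation of `Γ`, invariant
under the vertex-transitive group `Aut Γ`: all out-degrees equal some `k` and all in-degrees
some `l`, so `d = k + l`, and counting the arcs by tails and by heads gives `|V| k = |V| l`.
-/

open Finset

namespace SimpleGraph

variable {V : Type*} {G : SimpleGraph V}

lemma card_filter_out_eq_card_filter_in [Fintype V] [Nonempty V] (r : V → V → Prop)
    [DecidableRel r] {k l : ℕ} (hout : ∀ v, #{w | r v w} = k) (hin : ∀ v, #{w | r w v} = l) :
    k = l :=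
  Nat.eq_of_mul_eq_mul_left Fintype.card_pos <|
    card_mul_eq_card_mul r (s := univ) (t := univ) (fun v _ => hout v) (fun v _ => hin v)

lemma degree_eq_card_filter_add_card_filter [Fintype V] [DecidableRel G.Adj]
    (r : V → V → Prop) [DecidableRel r] (hadj : ∀ v w, G.Adj v w ↔ r v w ∨ r w v)
    (hasymm : ∀ v w, r v w → ¬ r w v) (v : V) :
    G.degree v = #{w | r v w} + #{w | r w v} := by
  classical
  rw [← card_union_of_disjoint (disjoint_filter.mpr fun w _ => hasymm v w), ← filter_or,
    ← card_neighborFinset_eq_degree]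
  congr 1
  ext w
  simp [hadj]

theorem even_of_isRegularOfDegree_of_orientation [Fintype V] [Nonempty V] [DecidableRel G.Adj]
    {d k l : ℕ} (hG : G.IsRegularOfDegree d) (r : V → V → Prop) [DecidableRel r]
    (hadj : ∀ v w, G.Adj v w ↔ r v w ∨ r w v) (hasymm : ∀ v w, r v w → ¬ r w v)
    (hout : ∀ v, #{w | r v w} = k) (hin : ∀ v, #{w | r w v} = l) :
    Even d := by
  obtain ⟨v⟩ := ‹Nonempty V›
  refine ⟨k, ?_⟩
  calc d = #{w | r v w} + #{w | r w v} := by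
        rw [← hG v, degree_eq_card_filter_add_card_filter r hadj hasymm]
    _ = k + k := by rw [hout, hin, card_filter_out_eq_card_filter_in r hout hin]

lemma card_filter_eq_of_autInvariant [Fintype V] (hVT : ∀ u v : V, ∃ g : G ≃g G, g u = v)
    (r : V → V → Prop) [DecidableRel r] (hr : ∀ (g : G ≃g G) v w, r (g v) (g w) ↔ r v w)
    (u v : V) : #{w | r v w} = #{w | r u w} := by
  obtain ⟨g, rfl⟩ := hVT u v
  exact card_equiv g.symm.toEquiv fun w => by simp [← hr g u (g.symm w)]

def InAutOrbit (G : SimpleGraph V) (a b v w : V) : Prop :=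
  ∃ g : G ≃g G, g v = a ∧ g w = b

namespace InAutOrbit

variable {a b v w : V}

lemma adj (hab : G.Adj a b) (h : G.InAutOrbit a b v w) : G.Adj v w := by
  obtain ⟨g, rfl, rfl⟩ := h
  exact g.map_adj_iff.mp hab

lemma apply_iff (g : G ≃g G) : G.InAutOrbit a b (g v) (g w) ↔ G.InAutOrbit a b v w :=
  ⟨fun ⟨f, hv, hw⟩ => ⟨g.trans f, hv, hw⟩,
    fun ⟨f, hv, hw⟩ => ⟨g.symm.trans f, by simpa using hv, by simpa using hw⟩⟩

lemma or_swap_of_adj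
    (hET : ∀ e ∈ G.edgeSet, ∀ f ∈ G.edgeSet, ∃ g : G ≃g G, Sym2.map g e = f)
    (hab : G.Adj a b) (hvw : G.Adj v w) : G.InAutOrbit a b v w ∨ G.InAutOrbit a b w v := by
  obtain ⟨g, hg⟩ := hET s(v, w) hvw s(a, b) hab
  rw [Sym2.map_mk, Sym2.eq_iff] at hg
  rcases hg with ⟨hv, hw⟩ | ⟨hw, hv⟩
  · exact .inl ⟨g, hv, hw⟩
  · exact .inr ⟨g, hv, hw⟩

lemma dartTransitive_of_and_swap
    (hET : ∀ e ∈ G.edgeSet, ∀ f ∈ G.edgeSet, ∃ g : G ≃g G, Sym2.map g e = f)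
    (hab : G.Adj a b) (hvw : G.InAutOrbit a b v w) (hwv : G.InAutOrbit a b w v) :
    ∀ u u' x y : V, G.Adj u u' → G.Adj x y → ∃ g : G ≃g G, g u = x ∧ g u' = y := by
  have hba : G.InAutOrbit a b b a := by
    obtain ⟨g, hgv, hgw⟩ := hvw
    obtain ⟨f, hfw, hfv⟩ := hwv
    exact ⟨g.symm.trans f, by simp [← hgw, hfw], by simp [← hgv, hfv]⟩
  have hdart : ∀ x y, G.Adj x y → G.InAutOrbit a b x y := by
    intro x y hxy
    refine (or_swap_of_adj hET hab hxy).elim id fun ⟨g, hy, hx⟩ => ?_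
    obtain ⟨s, hsb, hsa⟩ := hba
    exact ⟨g.trans s, by simp [hx, hsb], by simp [hy, hsa]⟩
  intro u u' x y huu' hxy
  obtain ⟨g, hgu, hgu'⟩ := hdart u u' huu'
  obtain ⟨f, hfx, hfy⟩ := hdart x y hxy
  exact ⟨g.trans f.symm, by simp [hgu, ← hfx], by simp [hgu', ← hfy]⟩

end InAutOrbit

end SimpleGraph

/-- Every half-arc-transitive graph (vertex- and edge-transitive, but not
dart-transitive) of valence `d` has `d` even. -/
theorem halfArcTransitive_even_valence {V : Type*} [Fintype V] (G : SimpleGraph V) (d : ℕ)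
    (hreg : ∀ v : V, (G.neighborSet v).ncard = d)
    (hVT : ∀ u v : V, ∃ g : G ≃g G, g u = v)
    (hET : ∀ e ∈ G.edgeSet, ∀ f ∈ G.edgeSet, ∃ g : G ≃g G, Sym2.map g e = f)
    (hnDT : ¬ (∀ u v x y : V, G.Adj u v → G.Adj x y → ∃ g : G ≃g G, g u = x ∧ g v = y)) :
    Even d := by
  classical
  obtain ⟨a, b, hab⟩ : ∃ a b, G.Adj a b := by
    contrapose! hnDT
    exact fun u v _ _ huv => (hnDT u v huv).elim
  have : Nonempty V := ⟨a⟩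
  have hG : G.IsRegularOfDegree d := fun v => by
    rw [← hreg v, ← G.card_neighborSet_eq_degree, Set.ncard_eq_toFinset_card',
      Set.toFinset_card]
  let r := G.InAutOrbit a b
  have hr : ∀ (g : G ≃g G) v w, r (g v) (g w) ↔ r v w := fun g _ _ =>
    SimpleGraph.InAutOrbit.apply_iff g
  exact SimpleGraph.even_of_isRegularOfDegree_of_orientation hG r
    (fun v w => ⟨SimpleGraph.InAutOrbit.or_swap_of_adj hET hab,
      (·.elim (·.adj hab) (·.adj hab |>.symm))⟩)
    (fun v w hvw hwv => hnDT (hvw.dartTransitive_of_and_swap hET hab hwv))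
    (G.card_filter_eq_of_autInvariant hVT r hr a)
    (G.card_filter_eq_of_autInvariant hVT (fun v w => r w v) (fun g v w => hr g w v) a)
end

section
/- A graph whose automorphism group acts transitively on edges but not on vertices is bipartite, with each edge having one endpoint in each part. -/
/-!
The automorphism orbits of the two endpoints `a`, `b` of one edge cover every edge, with one
endpoint in each: an automorphism carrying `{a, b}` to `{u, v}` sends `a` to `u` or to `v`.
Since no vertex is isolated, every vertex lies in one of the two orbits; they cannot coincide,
as that orbit would then be everything, so they are disjoint and the orbit of `a` is one side
of a bipartition.
-/

namespace SimpleGraph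

open MulAction

variable {V : Type*}

def IsEdgeTransitive (G : SimpleGraph V) : Prop :=
  ∀ e ∈ G.edgeSet, ∀ f ∈ G.edgeSet, ∃ g : G ≃g G, Sym2.map g e = f

namespace IsEdgeTransitive

variable {G : SimpleGraph V} {a b u v : V}

theorem mem_orbit_of_adj (hET : G.IsEdgeTransitive) (hab : G.Adj a b) (huv : G.Adj u v) :
    (u ∈ orbit (G ≃g G) a ∧ v ∈ orbit (G ≃g G) b) ∨
      (u ∈ orbit (G ≃g G) b ∧ v ∈ orbit (G ≃g G) a) := by
  obtain ⟨g, hg⟩ := hET _ (G.mem_edgeSet.2 hab) _ (G.mem_edgeSet.2 huv)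
  rw [Sym2.map_mk, Sym2.eq_iff] at hg
  rcases hg with ⟨hu, hv⟩ | ⟨hv, hu⟩
  · exact .inl ⟨⟨g, hu⟩, ⟨g, hv⟩⟩
  · exact .inr ⟨⟨g, hu⟩, ⟨g, hv⟩⟩

theorem mem_orbit_or_mem_orbit (hET : G.IsEdgeTransitive) (hiso : ∀ v, ∃ u, G.Adj v u)
    (hab : G.Adj a b) (u : V) : u ∈ orbit (G ≃g G) a ∨ u ∈ orbit (G ≃g G) b :=
  let ⟨_, huw⟩ := hiso u
  (hET.mem_orbit_of_adj hab huw).imp And.left And.left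

theorem disjoint_orbit (hET : G.IsEdgeTransitive) (hiso : ∀ v, ∃ u, G.Adj v u)
    (hnVT : ¬ IsPretransitive (G ≃g G) V) (hab : G.Adj a b) :
    Disjoint (orbit (G ≃g G) a) (orbit (G ≃g G) b) := by
  refine (orbit.eq_or_disjoint a b).resolve_left fun h => hnVT ?_
  rw [isPretransitive_iff_orbit_eq_univ a, Set.eq_univ_iff_forall]
  intro u
  simpa only [h, or_self] using hET.mem_orbit_or_mem_orbit hiso hab u

theorem mem_orbit_iff_not_mem_orbit (hET : G.IsEdgeTransitive)
    (hdisj : Disjoint (orbit (G ≃g G) a) (orbit (G ≃g G) b)) (hab : G.Adj a b)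
    (huv : G.Adj u v) : u ∈ orbit (G ≃g G) a ↔ v ∉ orbit (G ≃g G) a := by
  rcases hET.mem_orbit_of_adj hab huv with ⟨hu, hv⟩ | ⟨hu, hv⟩
  · exact iff_of_true hu (Set.disjoint_right.1 hdisj hv)
  · exact iff_of_false (Set.disjoint_right.1 hdisj hu) (not_not_intro hv)

end IsEdgeTransitive

end SimpleGraph

theorem edgeTransitive_not_vertexTransitive_bipartite_general {V : Type*}
    (G : SimpleGraph V)
    (hiso : ∀ v : V, ∃ u : V, G.Adj v u)
    (hET : ∀ e ∈ G.edgeSet, ∀ f ∈ G.edgeSet, ∃ g : G ≃g G, Sym2.map g e = f)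
    (hnVT : ¬ (∀ u v : V, ∃ g : G ≃g G, g u = v)) :
    ∃ s : Set V, ∀ u v : V, G.Adj u v → (u ∈ s ↔ v ∉ s) := by
  have hET : SimpleGraph.IsEdgeTransitive G := hET
  have hnVT : ¬ MulAction.IsPretransitive (G ≃g G) V := fun h => hnVT h.exists_smul_eq
  obtain ⟨a⟩ : Nonempty V := not_isEmpty_iff.1 fun _ => hnVT ⟨fun u => isEmptyElim u⟩
  obtain ⟨b, hab⟩ := hiso a
  have hdisj := hET.disjoint_orbit hiso hnVT hab
  exact ⟨MulAction.orbit (G ≃g G) a, fun _ _ huv =>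
    hET.mem_orbit_iff_not_mem_orbit hdisj hab huv⟩

/-- A graph whose automorphism group is transitive on edges but not on vertices is
bipartite, with each edge having one endpoint in each part. -/
theorem edgeTransitive_not_vertexTransitive_bipartite {V : Type*} [Fintype V]
    (G : SimpleGraph V)
    (hiso : ∀ v : V, ∃ u : V, G.Adj v u)
    (hET : ∀ e ∈ G.edgeSet, ∀ f ∈ G.edgeSet, ∃ g : G ≃g G, Sym2.map g e = f)
    (hnVT : ¬ (∀ u v : V, ∃ g : G ≃g G, g u = v)) :
    ∃ s : Set V, ∀ u v : V, G.Adj u v → (u ∈ s ↔ v ∉ s) :=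
  edgeTransitive_not_vertexTransitive_bipartite_general G hiso hET hnVT
end

section
/- If Λ is a dart-transitive tetravalent graph, then SDD(Λ) is edge-transitive. -/
/-!
An edge of `SDD(Λ)` joins an edge `e` of `Λ` to a pair `(v, i)` with `v ∈ e`, so it amounts to a
dart of `Λ` (from `v` along `e`) together with a label `i`. An automorphism of `Λ` combined with
any permutation of the labels is an automorphism of `SDD(Λ)`; dart-transitivity of `Λ` moves the
dart, and a transposition of the labels moves the label.
-/

/-- The subdivided double `SDD(Λ)`. -/
def SDD {V : Type*} (Λ : SimpleGraph V) : SimpleGraph (Λ.edgeSet ⊕ V × ZMod 2) :=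
  SimpleGraph.fromRel (fun x y =>
    match x, y with
    | Sum.inl e, Sum.inr (v, _) => v ∈ (e : Sym2 V)
    | _, _ => False)

theorem Sym2.mem_map_of_injective {α β : Type*} {f : α → β} (hf : Function.Injective f)
    {a : α} {z : Sym2 α} : f a ∈ z.map f ↔ a ∈ z := by
  simp [Sym2.mem_map, hf.eq_iff]

namespace SDD

variable {V : Type*} {Λ : SimpleGraph V}

@[simp] lemma adj_inl_inr {e : Λ.edgeSet} {v : V} {i : ZMod 2} :
    (SDD Λ).Adj (.inl e) (.inr (v, i)) ↔ v ∈ (e : Sym2 V) := by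
  simp [SDD]

@[simp] lemma adj_inr_inl {e : Λ.edgeSet} {v : V} {i : ZMod 2} :
    (SDD Λ).Adj (.inr (v, i)) (.inl e) ↔ v ∈ (e : Sym2 V) := by
  rw [SimpleGraph.adj_comm, adj_inl_inr]

@[simp] lemma not_adj_inl_inl (e f : Λ.edgeSet) : ¬ (SDD Λ).Adj (.inl e) (.inl f) := by
  simp [SDD]

@[simp] lemma not_adj_inr_inr (x y : V × ZMod 2) : ¬ (SDD Λ).Adj (.inr x) (.inr y) := by
  simp [SDD]

lemma exists_eq_of_mem_edgeSet {x : Sym2 (Λ.edgeSet ⊕ V × ZMod 2)} (hx : x ∈ (SDD Λ).edgeSet) :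
    ∃ (e : Λ.edgeSet) (v : V) (i : ZMod 2), v ∈ (e : Sym2 V) ∧ x = s(.inl e, .inr (v, i)) := by
  induction x using Sym2.ind with
  | _ x y =>
    rcases x with e | ⟨v, i⟩ <;> rcases y with f | ⟨w, j⟩ <;>
      simp only [SimpleGraph.mem_edgeSet, adj_inl_inr, adj_inr_inl, not_adj_inl_inl,
        not_adj_inr_inr] at hx
    · exact ⟨e, w, j, hx, rfl⟩
    · exact ⟨f, v, i, hx, Sym2.eq_swap⟩

end SDD

namespace SimpleGraph

variable {V W : Type*} {G : SimpleGraph V} {G' : SimpleGraph W}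

def Iso.sdd (g : G ≃g G') (σ : Equiv.Perm (ZMod 2)) : SDD G ≃g SDD G' where
  toEquiv := Equiv.sumCongr g.mapEdgeSet (g.toEquiv.prodCongr σ)
  map_rel_iff' := by
    rintro (e | ⟨v, i⟩) (f | ⟨w, j⟩) <;>
      simp [Sym2.mem_map_of_injective g.injective]

lemma exists_iso_apply_eq_and_mapEdgeSet_eq
    (hDT : ∀ a b c d : V, G.Adj a b → G.Adj c d → ∃ g : G ≃g G, g a = c ∧ g b = d)
    {e f : G.edgeSet} {v w : V} (hv : v ∈ (e : Sym2 V)) (hw : w ∈ (f : Sym2 V)) :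
    ∃ g : G ≃g G, g v = w ∧ g.mapEdgeSet e = f := by
  obtain ⟨e, he⟩ := e
  obtain ⟨f, hf⟩ := f
  obtain ⟨v', rfl⟩ := Sym2.mem_iff_exists.mp hv
  obtain ⟨w', rfl⟩ := Sym2.mem_iff_exists.mp hw
  obtain ⟨g, rfl, rfl⟩ := hDT v v' w w' he hf
  exact ⟨g, rfl, rfl⟩

end SimpleGraph

theorem SDD_edgeTransitive_general {V : Type*} (Λ : SimpleGraph V)
    (hDT : ∀ a b c d : V, Λ.Adj a b → Λ.Adj c d → ∃ g : Λ ≃g Λ, g a = c ∧ g b = d) :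
    ∀ e ∈ (SDD Λ).edgeSet, ∀ f ∈ (SDD Λ).edgeSet,
      ∃ g : SDD Λ ≃g SDD Λ, Sym2.map g e = f := by
  intro x hx y hy
  obtain ⟨e, v, i, hv, rfl⟩ := SDD.exists_eq_of_mem_edgeSet hx
  obtain ⟨f, w, j, hw, rfl⟩ := SDD.exists_eq_of_mem_edgeSet hy
  obtain ⟨g, hgv, hge⟩ := SimpleGraph.exists_iso_apply_eq_and_mapEdgeSet_eq hDT hv hw
  refine ⟨g.sdd (Equiv.swap i j), ?_⟩
  simp [SimpleGraph.Iso.sdd, hgv, hge]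

/-- If `Λ` is a dart-transitive tetravalent graph, then `SDD(Λ)` is edge-transitive. -/
theorem SDD_edgeTransitive {V : Type*} [Fintype V] (Λ : SimpleGraph V)
    (hreg : ∀ v : V, (Λ.neighborSet v).ncard = 4)
    (hDT : ∀ a b c d : V, Λ.Adj a b → Λ.Adj c d → ∃ g : Λ ≃g Λ, g a = c ∧ g b = d) :
    ∀ e ∈ (SDD Λ).edgeSet, ∀ f ∈ (SDD Λ).edgeSet,
      ∃ g : SDD Λ ≃g SDD Λ, Sym2.map g e = f :=
  SDD_edgeTransitive_general Λ hDT
end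

section
/- For n ≥ 5 not divisible by 3: if n ≡ 1 (mod 3) then the depleted wreath graph DW(n,3) is isomorphic to the circulant C_{3n}(1, n+1), and if n ≡ 2 (mod 3) then DW(n,3) is isomorphic to C_{3n}(1, n−1). -/
/-!
`DW(n,3)` is the circulant graph on `ZMod n × ZMod 3` with jumps `(1, 1)` and `(1, -1)`, because
`s ≠ r` in `ZMod 3` means `s - r = ±1`. When `3 ∤ n`, the Chinese remainder isomorphism
`ZMod (3n) ≃ ZMod n × ZMod 3` sends the jump `1` to `(1, 1)`, and sends `n + 1` to `(1, -1)` if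
`n ≡ 1 (mod 3)` and `n - 1` to `-(1, -1)` if `n ≡ 2 (mod 3)`; a circulant graph does not change
when a jump is replaced by its negative.
-/

/-- The depleted wreath graph `DW(n,3)` on `ZMod n × ZMod 3`: `(i,r)` is adjacent to
`(i+1,s)` for all `s ≠ r`. -/
def depletedWreath (n : ℕ) : SimpleGraph (ZMod n × ZMod 3) :=
  SimpleGraph.fromRel (fun u v => v.1 = u.1 + 1 ∧ v.2 ≠ u.2)

open SimpleGraph

def AddEquiv.circulantGraphIso {G H : Type*} [AddGroup G] [AddGroup H] (φ : G ≃+ H)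
    (s : Set G) : circulantGraph s ≃g circulantGraph (φ '' s) where
  toEquiv := φ.toEquiv
  map_rel_iff' {u v} := by
    simp only [AddEquiv.toEquiv_eq_coe, EquivLike.coe_coe, circulantGraph_adj,
      EmbeddingLike.apply_eq_iff_eq, ← map_sub, φ.injective.mem_set_image]

theorem SimpleGraph.circulantGraph_pair_neg_right {G : Type*} [AddGroup G] (a b : G) :
    circulantGraph {a, -b} = circulantGraph {a, b} := by
  have hneg (x y : G) : x - y = -b ↔ y - x = b := by rw [← neg_sub, neg_inj]
  ext u v
  simp only [circulantGraph_adj, Set.mem_insert_iff, Set.mem_singleton_iff, hneg]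
  tauto

theorem circGraph_eq_circulantGraph (m : ℕ) (a : ZMod m) :
    circGraph m a = circulantGraph {1, a} := by
  ext i j
  simp only [circGraph, fromRel_adj, circulantGraph_adj, Set.mem_insert_iff,
    Set.mem_singleton_iff, sub_eq_iff_eq_add']
  tauto

theorem depletedWreath_eq_circulantGraph (n : ℕ) :
    depletedWreath n = circulantGraph {((1 : ZMod n), (1 : ZMod 3)), (1, -1)} := by
  have hZ3 : ∀ r s : ZMod 3, s ≠ r ↔ s - r = 1 ∨ s - r = -1 := by decide
  ext u v
  simp only [depletedWreath, fromRel_adj, ne_eq, circulantGraph_adj, Set.mem_insert_iff,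
    Set.mem_singleton_iff, Prod.ext_iff, Prod.fst_add, Prod.snd_add, sub_eq_iff_eq_add', hZ3]
  tauto

theorem depletedWreath_iso_circGraph_of_addEquiv {m n : ℕ} (φ : ZMod m ≃+ ZMod n × ZMod 3)
    (h1 : φ 1 = (1, 1)) {a : ZMod m} (ha : φ a = (1, -1) ∨ φ a = (-1, 1)) :
    Nonempty (depletedWreath n ≃g circGraph m a) := by
  have hS : circulantGraph (φ '' {1, a}) = depletedWreath n := by
    rw [Set.image_pair, h1, depletedWreath_eq_circulantGraph]
    rcases ha with ha | ha
    · rw [ha]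
    · rw [ha, show ((-1 : ZMod n), (1 : ZMod 3)) = -(1, -1) by simp, circulantGraph_pair_neg_right]
  rw [circGraph_eq_circulantGraph, ← hS]
  exact ⟨(φ.circulantGraphIso _).symm⟩

theorem depletedWreath_iso_circulant_general (n : ℕ) (h3 : ¬ (3 ∣ n)) :
    (n % 3 = 1 → Nonempty (depletedWreath n ≃g circGraph (3 * n) ((n : ZMod (3 * n)) + 1))) ∧
    (n % 3 = 2 → Nonempty (depletedWreath n ≃g circGraph (3 * n) ((n : ZMod (3 * n)) - 1))) := by
  have hcop : Nat.Coprime 3 n := Nat.prime_three.coprime_iff_not_dvd.mpr h3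
  set φ := (ZMod.chineseRemainder hcop).trans RingEquiv.prodComm
  have hφn : φ n = (0, (n : ZMod 3)) := by
    simp only [map_natCast, Prod.ext_iff, Prod.fst_natCast, ZMod.natCast_self, Prod.snd_natCast,
      and_self]
  refine ⟨fun hn1 => depletedWreath_iso_circGraph_of_addEquiv φ.toAddEquiv (map_one φ) (Or.inl ?_),
    fun hn2 => depletedWreath_iso_circGraph_of_addEquiv φ.toAddEquiv (map_one φ) (Or.inr ?_)⟩
  · have h : (n : ZMod 3) = 1 := by rw [← ZMod.natCast_mod, hn1, Nat.cast_one]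
    change φ (n + 1) = _
    rw [map_add, map_one, hφn, h]
    exact Prod.ext (zero_add 1) (show (1 : ZMod 3) + 1 = -1 by decide)
  · have h : (n : ZMod 3) = 2 := by rw [← ZMod.natCast_mod, hn2, Nat.cast_ofNat]
    change φ (n - 1) = _
    rw [map_sub, map_one, hφn, h]
    exact Prod.ext (zero_sub 1) (show (2 : ZMod 3) - 1 = 1 by decide)

/-- For `n ≥ 5` not divisible by 3: if `n ≡ 1 (mod 3)` then `DW(n,3) ≅ C_{3n}(1,n+1)`,
and if `n ≡ 2 (mod 3)` then `DW(n,3) ≅ C_{3n}(1,n−1)`. -/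
theorem depletedWreath_iso_circulant (n : ℕ) (hn : 5 ≤ n) (h3 : ¬ (3 ∣ n)) :
    (n % 3 = 1 → Nonempty (depletedWreath n ≃g circGraph (3 * n) ((n : ZMod (3 * n)) + 1))) ∧
    (n % 3 = 2 → Nonempty (depletedWreath n ≃g circGraph (3 * n) ((n : ZMod (3 * n)) - 1))) :=
  depletedWreath_iso_circulant_general n h3
end

section
/- For the rose window graph R_n(2,1) with n ≥ 5, R_n(2,1) is isomorphic to the wreath graph W(n,2). -/
/-- The rose window graph `R_n(a,r)`: vertices `A_i` (left summand) and `B_i` (right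
summand) for `i ∈ ZMod n`, with rim edges `A_i–A_{i+1}`, in-spokes `A_i–B_i`,
out-spokes `B_i–A_{i+a}` and hub edges `B_i–B_{i+r}`. -/
def roseWindow (n : ℕ) (a r : ZMod n) : SimpleGraph (ZMod n ⊕ ZMod n) :=
  SimpleGraph.fromRel (fun u v =>
    match u, v with
    | Sum.inl i, Sum.inl j => j = i + 1
    | Sum.inl i, Sum.inr j => j = i
    | Sum.inr i, Sum.inl j => j = i + a
    | Sum.inr i, Sum.inr j => j = i + r)

/-- For `n ≥ 5`, the rose window graph `R_n(2,1)` is isomorphic to `W(n,2)`. -/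
theorem roseWindow_iso_wreath (n : ℕ) (hn : 5 ≤ n) :
    Nonempty (roseWindow n 2 1 ≃g wreathGraph n) := by
  refine ⟨⟨{ toFun := Sum.elim (fun i => (i, 0)) (fun i => (i + 1, 1)),
             invFun := fun p => if p.2 = 0 then Sum.inl p.1 else Sum.inr (p.1 - 1),
             left_inv := ?_, right_inv := ?_ }, ?_⟩⟩
  · rintro (i | i) <;> simp
  · rintro ⟨i, r⟩
    fin_cases r
    · exact Prod.ext rfl rfl
    · exact Prod.ext (sub_add_cancel i 1) rfl
  · rintro (i | i) (j | j) <;>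
      simp [roseWindow, wreathGraph, SimpleGraph.fromRel_adj, Prod.ext_iff]
    all_goals ring_nf
end
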